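/- arXiv:2507.12361 — 2 statements merged into one kernel-verified Lean document; each statement's English description precedes it below -/
import Mathlib

section
/- Let τ be the order type of a subset of ℝ, and suppose τ = σ₀ + σ₁ where both σ₀ and σ₁ are inexact order types. Then ⟨ℝ,<⟩ ↛ (τ)^τ: there is a 2-colouring of the subsets of ℝ of order type τ with no homogeneous subset of order type τ. -/
/-- A linear order is inexact if some proper subset of it is order-isomorphic
to the whole order. -/
def IsInexact (α : Type*) [LinearOrder α] : Prop :=
  ∃ s : Set α, s ≠ Set.univ ∧ Nonempty (↥s ≃o α)

section Aux

open Function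

/-- Combinatorial core: if `c` is a strictly decreasing choice function on the sets
satisfying `P` (and the identity elsewhere), then there is a 2-colouring `F` with
`F (c a) ≠ F a` for every `a` with `P a`. -/
theorem exists_flip_colouring {α : Type*} [PartialOrder α] (P : α → Prop) (c : α → α)
    (hlt : ∀ a, P a → c a < a) (hP : ∀ a, P a → P (c a))
    (hfix : ∀ a, ¬ P a → c a = a) :
    ∃ F : α → Fin 2, ∀ a, P a → F (c a) ≠ F a := by
  classical
  -- iterates preserve `P`
  have iterP : ∀ (n : ℕ) (a : α), P a → P (c^[n] a) := by
    intro n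
    induction n with
    | zero => intro a ha; simpa using ha
    | succ k ih =>
      intro a ha
      rw [Function.iterate_succ_apply]
      exact ih _ (hP a ha)
  -- iterates are strictly decreasing on `P`, hence injective in the exponent
  have iter_inj : ∀ a : α, P a → ∀ m n : ℕ, c^[m] a = c^[n] a → m = n := by
    intro a ha m n h
    have hanti : StrictAnti (fun k => c^[k] a) := by
      refine strictAnti_nat_of_succ_lt ?_
      intro k
      rw [Function.iterate_succ_apply']
      exact hlt _ (iterP k a ha)
    exact hanti.injective h
  -- the equivalence relation "some iterates agree"
  let r : α → α → Prop := fun a b => ∃ m n : ℕ, c^[m] a = c^[n] b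
  have hrefl : ∀ a, r a a := fun a => ⟨0, 0, rfl⟩
  have hsymm : ∀ {a b}, r a b → r b a := by
    rintro a b ⟨m, n, h⟩; exact ⟨n, m, h.symm⟩
  have htrans : ∀ {a b d}, r a b → r b d → r a d := by
    rintro a b d ⟨m, n, h1⟩ ⟨m', n', h2⟩
    refine ⟨m' + m, n + n', ?_⟩
    rw [Function.iterate_add_apply, h1, ← Function.iterate_add_apply,
      Nat.add_comm m' n, Function.iterate_add_apply, h2, ← Function.iterate_add_apply]
  let st : Setoid α := ⟨r, fun a => hrefl a, fun h => hsymm h, fun h h' => htrans h h'⟩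
  let rep : α → α := fun a => (Quotient.mk st a).out
  have hrep : ∀ a, r (rep a) a := fun a => Quotient.mk_out (s := st) a
  have hrep_eq : ∀ a b, r a b → rep a = rep b := by
    intro a b h
    have : (Quotient.mk st a) = Quotient.mk st b := Quotient.sound h
    simp only [rep, this]
  -- representatives of `P`-classes satisfy `P`
  have hrepP : ∀ a, P a → P (rep a) := by
    intro a ha
    by_contra hR
    obtain ⟨m, n, h⟩ := hrep a
    have hfix' : c^[m] (rep a) = rep a := Function.iterate_fixed (hfix _ hR) m
    rw [hfix'] at h
    exact hR (h ▸ iterP n a ha)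
  -- parity of witnesses is well-defined
  have parity : ∀ R, P R → ∀ x m n m' n', c^[m] x = c^[n] R → c^[m'] x = c^[n'] R →
      (m + n) % 2 = (m' + n') % 2 := by
    have key : ∀ R, P R → ∀ x m n m' n', m ≤ m' → c^[m] x = c^[n] R → c^[m'] x = c^[n'] R →
        (m + n) % 2 = (m' + n') % 2 := by
      intro R hR x m n m' n' hle h h'
      obtain ⟨d, rfl⟩ := Nat.exists_eq_add_of_le hle
      have : c^[d + n] R = c^[n'] R := by
        rw [Function.iterate_add_apply, ← h, ← Function.iterate_add_apply, Nat.add_comm d m, h']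
      have := iter_inj R hR _ _ this
      omega
    intro R hR x m n m' n' h h'
    rcases le_total m m' with hle | hle
    · exact key R hR x m n m' n' hle h h'
    · exact (key R hR x m' n' m n hle h' h).symm
  -- the colouring
  refine ⟨fun a => if ∃ m n : ℕ, c^[m] a = c^[n] (rep a) ∧ (m + n) % 2 = 0 then 0 else 1, ?_⟩
  intro a ha
  obtain ⟨m, n, hmn⟩ := hsymm (hrep a)
  have hRP : P (rep a) := hrepP a ha
  have hrepca : rep (c a) = rep a := by
    refine hrep_eq (c a) a ⟨0, 1, by simp⟩
  -- a witness for `c a` with flipped parity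
  obtain ⟨m', n', hmn', hpar⟩ :
      ∃ m' n' : ℕ, c^[m'] (c a) = c^[n'] (rep a) ∧ (m' + n') % 2 ≠ (m + n) % 2 := by
    rcases m with _ | k
    · refine ⟨0, n + 1, ?_, by omega⟩
      simp only [Function.iterate_zero_apply]
      rw [Function.iterate_succ_apply', ← hmn]
      simp
    · refine ⟨k, n, ?_, by omega⟩
      rw [← Function.iterate_succ_apply]
      exact hmn
  have hFa : (∃ m₁ n₁ : ℕ, c^[m₁] a = c^[n₁] (rep a) ∧ (m₁ + n₁) % 2 = 0) ↔ (m + n) % 2 = 0 := by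
    constructor
    · rintro ⟨m₁, n₁, h₁, h₂⟩
      rw [← parity (rep a) hRP a m₁ n₁ m n h₁ hmn]
      exact h₂
    · intro h; exact ⟨m, n, hmn, h⟩
  have hFca : (∃ m₁ n₁ : ℕ, c^[m₁] (c a) = c^[n₁] (rep (c a)) ∧ (m₁ + n₁) % 2 = 0) ↔
      (m' + n') % 2 = 0 := by
    rw [hrepca]
    constructor
    · rintro ⟨m₁, n₁, h₁, h₂⟩
      rw [← parity (rep a) hRP (c a) m₁ n₁ m' n' h₁ hmn']
      exact h₂
    · intro h; exact ⟨m', n', hmn', h⟩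
  simp only [hFa, hFca]
  rcases Nat.mod_two_eq_zero_or_one (m + n) with h | h <;>
    rcases Nat.mod_two_eq_zero_or_one (m' + n') with h' | h' <;>
      simp [h, h'] at hpar ⊢ <;> omega

/-- From an inexact linear order we get a non-surjective order embedding. -/
theorem IsInexact.exists_embedding {β : Type*} [LinearOrder β] (h : IsInexact β) :
    ∃ (g : β ↪o β) (b₀ : β), b₀ ∉ Set.range g := by
  obtain ⟨s, hs, ⟨f⟩⟩ := h
  obtain ⟨b₀, hb₀⟩ : ∃ b₀, b₀ ∉ s := by
    by_contra hc
    push_neg at hc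
    exact hs (Set.eq_univ_of_forall hc)
  have hmono : StrictMono (fun b => ((f.symm b : s) : β)) := by
    intro x y hxy
    exact Subtype.coe_lt_coe.mpr (f.symm.strictMono hxy)
  refine ⟨OrderEmbedding.ofStrictMono _ hmono, b₀, ?_⟩
  rintro ⟨b, hb⟩
  exact hb₀ (hb ▸ (f.symm b).2)

/-- A lex sum with inexact right summand admits a non-surjective order embedding. -/
theorem sumLex_exists_embedding (σ₀ σ₁ : Type*) [LinearOrder σ₀] [LinearOrder σ₁]
    (h₁ : IsInexact σ₁) :
    ∃ (g : (σ₀ ⊕ₗ σ₁) ↪o (σ₀ ⊕ₗ σ₁)) (x₀ : σ₀ ⊕ₗ σ₁), x₀ ∉ Set.range g := by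
  obtain ⟨g₁, b₀, hb₀⟩ := h₁.exists_embedding
  let G : σ₀ ⊕ₗ σ₁ → σ₀ ⊕ₗ σ₁ := fun x => toLex (Sum.map id g₁ (ofLex x))
  have hmono : StrictMono G := by
    intro x y hxy
    rcases x with x | x <;> rcases y with y | y
    · exact Sum.Lex.inl_lt_inl_iff.mpr (Sum.Lex.inl_lt_inl_iff.mp hxy)
    · exact Sum.Lex.inl_lt_inr _ _
    · exact absurd hxy Sum.Lex.not_inr_lt_inl
    · exact Sum.Lex.inr_lt_inr_iff.mpr (g₁.strictMono (Sum.Lex.inr_lt_inr_iff.mp hxy))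
  refine ⟨OrderEmbedding.ofStrictMono G hmono, toLex (Sum.inr b₀), ?_⟩
  rintro ⟨x, hx⟩
  rcases x with x | x
  · exact Sum.inl_ne_inr (toLex.injective hx)
  · exact hb₀ ⟨x, Sum.inr.inj (toLex.injective hx)⟩

/-- Any subset of ℝ of a type admitting a non-surjective self-embedding has a
proper subset of the same order type. -/
theorem exists_proper_subset {τ : Type*} [LinearOrder τ] (g : τ ↪o τ) (x₀ : τ)
    (hx₀ : x₀ ∉ Set.range g) (H : Set ℝ) (e : ↥H ≃o τ) :
    ∃ s : Set ℝ, s ⊆ H ∧ s ≠ H ∧ Nonempty (↥s ≃o τ) := by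
  let k : ↥H → ℝ := fun x => ((e.symm (g (e x)) : ↥H) : ℝ)
  have hk : StrictMono k := by
    intro x y hxy
    exact Subtype.coe_lt_coe.mpr (e.symm.strictMono (g.strictMono (e.strictMono hxy)))
  refine ⟨Set.range k, ?_, ?_, ⟨((hk.orderIso k).symm.trans e)⟩⟩
  · rintro _ ⟨x, rfl⟩
    exact (e.symm (g (e x))).2
  · intro hEq
    have hmem : ((e.symm x₀ : ↥H) : ℝ) ∈ Set.range k := by
      rw [hEq]; exact (e.symm x₀).2
    obtain ⟨x, hx⟩ := hmem
    have : e.symm (g (e x)) = e.symm x₀ := Subtype.coe_injective hx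
    exact hx₀ ⟨e x, e.symm.injective this⟩

end Aux

/-- If `τ = σ₀ + σ₁` is the order type of a subset of `ℝ` and both summands are
inexact, then `⟨ℝ,<⟩ ↛ (τ)^τ`: there is a 2-colouring of the subsets of `ℝ` of
order type `τ` with no homogeneous set of order type `τ`. -/
theorem sum_of_inexacts_no_partition_relation
    (σ₀ σ₁ : Type*) [LinearOrder σ₀] [LinearOrder σ₁]
    (h₀ : IsInexact σ₀) (h₁ : IsInexact σ₁)
    (hreal : ∃ A : Set ℝ, Nonempty (↥A ≃o (σ₀ ⊕ₗ σ₁))) :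
    ∃ F : Set ℝ → Fin 2, ∀ H : Set ℝ, Nonempty (↥H ≃o (σ₀ ⊕ₗ σ₁)) →
      ∃ s : Set ℝ, s ⊆ H ∧ Nonempty (↥s ≃o (σ₀ ⊕ₗ σ₁)) ∧ F s ≠ F H := by
  classical
  obtain ⟨g, x₀, hx₀⟩ := sumLex_exists_embedding σ₀ σ₁ h₁
  set P : Set ℝ → Prop := fun H => Nonempty (↥H ≃o (σ₀ ⊕ₗ σ₁)) with hPdef
  have key : ∀ H : Set ℝ, P H → ∃ s : Set ℝ, s < H ∧ P s := by
    intro H ⟨e⟩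
    obtain ⟨s, h1, h2, h3⟩ := exists_proper_subset g x₀ hx₀ H e
    exact ⟨s, lt_of_le_of_ne h1 h2, h3⟩
  let c : Set ℝ → Set ℝ := fun H => if h : P H then (key H h).choose else H
  have hlt : ∀ H, P H → c H < H := by
    intro H h
    simp only [c, dif_pos h]
    exact (key H h).choose_spec.1
  have hP : ∀ H, P H → P (c H) := by
    intro H h
    simp only [c, dif_pos h]
    exact (key H h).choose_spec.2
  have hfix : ∀ H, ¬ P H → c H = H := fun H h => dif_neg h
  obtain ⟨F, hF⟩ := exists_flip_colouring P c hlt hP hfix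
  refine ⟨F, fun H hH => ⟨c H, le_of_lt (hlt H hH), hP H hH, hF H hH⟩⟩
end

section
/- In ZF: for every natural number k, there is a 2-colouring of the subsets of ℝ of order type ω + k with no homogeneous subset of order type ω + ω + k and no homogeneous subset of order type ω* + ω + k. Specifically, fixing an enumeration ⟨q_n⟩ of ℚ and N(x,y) = min{n : q_n ∈ [min(x,y), max(x,y))}, the colouring F(x̄) = 0 iff N(x_0,x_1) > N(x_2,x_3) (where x_0 < x_1 < x_2 < x_3 are the four least elements of x̄) has no such homogeneous sets. -/
/-!
Let `N(x, y)` be the least index of a rational in `[x, y)`. The rationals `q 0, …, q m` cut `ℝ`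
into finitely many pieces, so among infinitely many points there are `x < y` in the same piece,
and then `N(x, y) > m`. In a set of type `L + ω + k` with `L` infinite (`L = ω` or `ω*`), write the
`ω`-block as `v₀ < v₁ < ⋯`. Placing such a pair `x₀ < x₁` from the `L`-block in front of the
`ω`-block gives a copy of `ω + k` with `N(v₀, v₁) < N(x₀, x₁)`, of colour `0`. On the other hand,
choosing `D` with `N(v₀, v_{D+1})` minimal, the copy `v₀, v_{D+1}, v_{D+2}, …` has colour `1`,
since `N(v_{D+2}, v_{D+3}) ≥ N(v₀, v_{D+3}) ≥ N(v₀, v_{D+1})`.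
-/

/-- `Nidx q x y` is the least `n` with `x ≤ q n < y`, for a fixed enumeration
`q` of the rationals. -/
noncomputable def Nidx (q : ℕ → ℚ) (x y : ℝ) : ℕ :=
  sInf {n : ℕ | x ≤ (q n : ℝ) ∧ (q n : ℝ) < y}

open Function Set

section Nidx

variable {q : ℕ → ℚ}

lemma Nidx_spec (hq : Surjective q) {x y : ℝ} (hxy : x < y) :
    x ≤ (q (Nidx q x y) : ℝ) ∧ (q (Nidx q x y) : ℝ) < y := by
  obtain ⟨r, hxr, hry⟩ := exists_rat_btwn hxy
  obtain ⟨n, rfl⟩ := hq r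
  exact Nat.sInf_mem (⟨n, hxr.le, hry⟩ : {m : ℕ | x ≤ (q m : ℝ) ∧ (q m : ℝ) < y}.Nonempty)

lemma Nidx_le {x y : ℝ} {n : ℕ} (hx : x ≤ (q n : ℝ)) (hy : (q n : ℝ) < y) : Nidx q x y ≤ n :=
  Nat.sInf_le ⟨hx, hy⟩

lemma Nidx_le_Nidx_of_le (hq : Surjective q) {x y x' y' : ℝ}
    (hx : x' ≤ x) (hxy : x < y) (hy : y ≤ y') : Nidx q x' y' ≤ Nidx q x y :=
  have h := Nidx_spec hq hxy
  Nidx_le (hx.trans h.1) (h.2.trans_le hy)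

lemma exists_lt_Nidx_of_injective (hq : Surjective q) {ι : Type*} [Infinite ι] {f : ι → ℝ}
    (hf : Injective f) (m : ℕ) : ∃ i j, f i < f j ∧ m < Nidx q (f i) (f j) := by
  have lt_Nidx_of_same_cut : ∀ x y : ℝ, x < y →
      {n : Fin (m + 1) | (q n : ℝ) < x} = {n : Fin (m + 1) | (q n : ℝ) < y} → m < Nidx q x y := by
    intro x y hxy hcut
    by_contra! hle
    have hn := Nidx_spec hq hxy
    have hmem : (⟨Nidx q x y, Nat.lt_succ_of_le hle⟩ : Fin (m + 1)) ∈
        {n : Fin (m + 1) | (q n : ℝ) < x} := hcut ▸ hn.2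
    exact (not_lt.2 hn.1) hmem
  obtain ⟨i, j, hij, hcut⟩ :=
    Finite.exists_ne_map_eq_of_infinite fun i => {n : Fin (m + 1) | (q n : ℝ) < f i}
  rcases (hf.ne hij).lt_or_gt with h | h
  · exact ⟨i, j, h, lt_Nidx_of_same_cut _ _ h hcut⟩
  · exact ⟨j, i, h, lt_Nidx_of_same_cut _ _ h hcut.symm⟩

end Nidx

instance Sum.Lex.wellFoundedLT {α β : Type*} [LT α] [LT β] [WellFoundedLT α] [WellFoundedLT β] :
    WellFoundedLT (α ⊕ₗ β) :=
  ⟨Sum.lex_wf wellFounded_lt wellFounded_lt⟩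

def lexElim {ι κ α : Type*} (v : ι → α) (w : κ → α) (p : ι ⊕ₗ κ) : α :=
  Sum.elim v w (ofLex p)

lemma strictMono_lexElim {ι κ α : Type*} [Preorder ι] [Preorder κ] [Preorder α]
    {v : ι → α} {w : κ → α} (hv : StrictMono v) (hw : StrictMono w) (hvw : ∀ i j, v i < w j) :
    StrictMono (lexElim v w) := by
  intro p p' hpp'
  rw [Sum.Lex.lt_def] at hpp'
  cases hpp' with
  | inl h => exact hv h
  | inr h => exact hw h
  | sep i j => exact hvw i j

lemma strictMono_natCases {α : Type*} [Preorder α] {a : α} {v : ℕ → α} (hv : StrictMono v)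
    (ha : a < v 0) : StrictMono (fun n => Nat.casesOn n a v : ℕ → α) :=
  strictMono_nat_of_lt_succ fun n => by cases n <;> simp [ha, hv (Nat.lt_succ_self _)]

section Colouring

variable (q : ℕ → ℚ) (k : ℕ)

open Classical in
/-- Since `ℕ ⊕ₗ Fin k` is well ordered, there is at most one `e : ℕ ⊕ₗ Fin k ≃o A`. -/
noncomputable def colouring (A : Set ℝ) : Fin 2 :=
  if ∃ e : (ℕ ⊕ₗ Fin k) ≃o A,
      Nidx q (e (toLex (Sum.inl 2))) (e (toLex (Sum.inl 3))) <
        Nidx q (e (toLex (Sum.inl 0))) (e (toLex (Sum.inl 1)))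
  then 0 else 1

variable {q k}

lemma colouring_eq_zero_iff (A : Set ℝ) (e : (ℕ ⊕ₗ Fin k) ≃o A) :
    colouring q k A = 0 ↔
      Nidx q (e (toLex (Sum.inl 2))) (e (toLex (Sum.inl 3))) <
        Nidx q (e (toLex (Sum.inl 0))) (e (toLex (Sum.inl 1))) := by
  have : Subsingleton ((ℕ ⊕ₗ Fin k) ≃o A) := OrderIso.subsingleton_of_wellFoundedLT
  unfold colouring
  split_ifs with h
  · obtain ⟨e', he'⟩ := h
    exact iff_of_true rfl (Subsingleton.elim e' e ▸ he')
  · exact iff_of_false (by decide) fun he => h ⟨e, he⟩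

lemma colouring_range_lexElim_eq_zero_iff {v : ℕ → ℝ} {w : Fin k → ℝ}
    (h : StrictMono (lexElim v w)) :
    colouring q k (range (lexElim v w)) = 0 ↔ Nidx q (v 2) (v 3) < Nidx q (v 0) (v 1) :=
  colouring_eq_zero_iff _ (StrictMono.orderIso _ h)

variable {v : ℕ → ℝ} {w : Fin k → ℝ}

lemma exists_colouring_eq_zero (hv : StrictMono v) (hw : StrictMono w)
    (hvw : ∀ n j, v n < w j) {x₀ x₁ : ℝ} (h₀₁ : x₀ < x₁) (h₁ : x₁ < v 0)
    (hN : Nidx q (v 0) (v 1) < Nidx q x₀ x₁) :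
    ∃ s ⊆ insert x₀ (insert x₁ (range (lexElim v w))),
      Nonempty (s ≃o (ℕ ⊕ₗ Fin k)) ∧ colouring q k s = 0 := by
  set v' : ℕ → ℝ := fun n => Nat.casesOn n x₀ fun n => Nat.casesOn n x₁ v
  have hv' : StrictMono v' := strictMono_natCases (strictMono_natCases hv h₁) h₀₁
  have hv'w : ∀ n j, v' n < w j := by
    rintro (_ | _ | n) j
    exacts [h₀₁.trans (h₁.trans (hvw 0 j)), h₁.trans (hvw 0 j), hvw n j]
  have hmono := strictMono_lexElim hv' hw hv'w
  refine ⟨_, ?_, ⟨(StrictMono.orderIso _ hmono).symm⟩,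
    (colouring_range_lexElim_eq_zero_iff hmono).2 hN⟩
  rintro _ ⟨(_ | _ | n) | j, rfl⟩
  exacts [Or.inl rfl, Or.inr (Or.inl rfl), Or.inr (Or.inr ⟨toLex (Sum.inl n), rfl⟩),
    Or.inr (Or.inr ⟨toLex (Sum.inr j), rfl⟩)]

lemma exists_colouring_ne_zero (hq : Surjective q) (hv : StrictMono v) (hw : StrictMono w)
    (hvw : ∀ n j, v n < w j) :
    ∃ t ⊆ range (lexElim v w), Nonempty (t ≃o (ℕ ⊕ₗ Fin k)) ∧ colouring q k t ≠ 0 := by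
  set D := argmin fun d => Nidx q (v 0) (v (d + 1))
  set v' : ℕ → ℝ := fun n => Nat.casesOn n (v 0) fun n => v (D + 1 + n)
  have hv' : StrictMono v' :=
    strictMono_natCases (hv.comp fun a b h => by omega) (hv (by omega))
  have hv'w : ∀ n j, v' n < w j := by
    rintro (_ | n) j
    exacts [hvw 0 j, hvw _ j]
  have hmono := strictMono_lexElim hv' hw hv'w
  refine ⟨_, ?_, ⟨(StrictMono.orderIso _ hmono).symm⟩, fun h => ?_⟩
  · rintro _ ⟨(_ | n) | j, rfl⟩
    exacts [⟨toLex (Sum.inl 0), rfl⟩, ⟨toLex (Sum.inl (D + 1 + n)), rfl⟩,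
      ⟨toLex (Sum.inr j), rfl⟩]
  refine ((colouring_range_lexElim_eq_zero_iff hmono).1 h).not_ge ?_
  calc Nidx q (v 0) (v (D + 1)) ≤ Nidx q (v 0) (v (D + 2 + 1)) :=
      argmin_le (fun d => Nidx q (v 0) (v (d + 1))) (D + 2)
    _ ≤ Nidx q (v (D + 2)) (v (D + 3)) :=
      Nidx_le_Nidx_of_le hq (hv.monotone (by omega)) (hv (by omega)) le_rfl

lemma exists_colouring_ne_of_orderIso (hq : Surjective q) {L : Type*} [LinearOrder L]
    [Infinite L] (H : Set ℝ) (e : (L ⊕ₗ (ℕ ⊕ₗ Fin k)) ≃o H) :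
    ∃ s t : Set ℝ, s ⊆ H ∧ t ⊆ H ∧
      Nonempty (s ≃o (ℕ ⊕ₗ Fin k)) ∧ Nonempty (t ≃o (ℕ ⊕ₗ Fin k)) ∧
      colouring q k s ≠ colouring q k t := by
  set u : L → ℝ := fun l => e (toLex (Sum.inl l))
  set v : ℕ → ℝ := fun n => e (toLex (Sum.inr (toLex (Sum.inl n))))
  set w : Fin k → ℝ := fun j => e (toLex (Sum.inr (toLex (Sum.inr j))))
  have hu : StrictMono u := fun a b h => e.strictMono (Sum.Lex.inl_lt_inl_iff.2 h)
  have hv : StrictMono v := fun a b h =>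
    e.strictMono (Sum.Lex.inr_lt_inr_iff.2 (Sum.Lex.inl_lt_inl_iff.2 h))
  have hw : StrictMono w := fun a b h =>
    e.strictMono (Sum.Lex.inr_lt_inr_iff.2 (Sum.Lex.inr_lt_inr_iff.2 h))
  have huv : ∀ l, u l < v 0 := fun l => e.strictMono (Sum.Lex.inl_lt_inr _ _)
  have hvw : ∀ n j, v n < w j := fun n j =>
    e.strictMono (Sum.Lex.inr_lt_inr_iff.2 (Sum.Lex.inl_lt_inr _ _))
  have htail : range (lexElim v w) ⊆ H := by
    rintro _ ⟨n | j, rfl⟩ <;> exact Subtype.prop _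
  obtain ⟨i, j, hij, hN⟩ := exists_lt_Nidx_of_injective hq hu.injective (Nidx q (v 0) (v 1))
  obtain ⟨s, hs, hs_iso, hs_zero⟩ := exists_colouring_eq_zero hv hw hvw hij (huv j) hN
  obtain ⟨t, ht, ht_iso, ht_ne_zero⟩ := exists_colouring_ne_zero hq hv hw hvw
  refine ⟨s, t, hs.trans (insert_subset (Subtype.prop _) (insert_subset (Subtype.prop _) htail)),
    ht.trans htail, hs_iso, ht_iso, hs_zero ▸ ht_ne_zero.symm⟩

end Colouring

/-- (ZF) For every `k`, the colouring of the subsets of `ℝ` of order type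
`ω + k` (represented by `ℕ ⊕ₗ Fin k`) giving `x̄` colour `0` iff
`N(x₀,x₁) > N(x₂,x₃)`, where `x₀ < x₁ < x₂ < x₃` are the four least elements of
`x̄`, has no homogeneous set of order type `ω + ω + k` and none of order type
`ω* + ω + k`. -/
theorem no_homogeneous_omega_omega_k (q : ℕ → ℚ) (hq : Function.Bijective q) (k : ℕ) :
    ∃ F : Set ℝ → Fin 2,
      (∀ (A : Set ℝ) (e : (ℕ ⊕ₗ Fin k) ≃o ↥A),
        (F A = 0 ↔
          Nidx q (e (toLex (Sum.inl 2)) : ℝ) (e (toLex (Sum.inl 3)) : ℝ) <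
            Nidx q (e (toLex (Sum.inl 0)) : ℝ) (e (toLex (Sum.inl 1)) : ℝ))) ∧
      ∀ H : Set ℝ,
        (Nonempty (↥H ≃o (ℕ ⊕ₗ (ℕ ⊕ₗ Fin k))) ∨
          Nonempty (↥H ≃o (ℕᵒᵈ ⊕ₗ (ℕ ⊕ₗ Fin k)))) →
        ∃ s t : Set ℝ, s ⊆ H ∧ t ⊆ H ∧
          Nonempty (↥s ≃o (ℕ ⊕ₗ Fin k)) ∧ Nonempty (↥t ≃o (ℕ ⊕ₗ Fin k)) ∧
          F s ≠ F t := by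
  refine ⟨colouring q k, colouring_eq_zero_iff, ?_⟩
  rintro H (⟨⟨e⟩⟩ | ⟨⟨e⟩⟩) <;> exact exists_colouring_ne_of_orderIso hq.2 H e.symm
end
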